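/- arXiv:1406.5660 — 2 statements merged into one kernel-verified Lean document; each statement's English description precedes it below -/
import Mathlib

section
/- With the same setup: for $w_n,w\in\mathbb{G}$, if $w_n(x)\to w(x)$ for every continuity point $x$ of $w$, then $M_{w_n}^{-1}\to M_w^{-1}$ uniformly on every compact interval $[-N,N]$. -/
/-!
`M_w⁻¹` is monotone, and continuous because `M_w` is strictly increasing. Pointwise convergence
comes from squeezing `M_w⁻¹ y` between continuity points `x` of `w`, which are dense as `M_w` is
monotone: `M_w x < y` forces `M_{w_n} x < y` for large `n`, hence `x ≤ M_{w_n}⁻¹ y`, and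
symmetrically from above. Finally (Pólya) a continuous pointwise limit of monotone functions is a
locally uniform limit: `F i y` is sandwiched between `F i a` and `F i b` for `a ≤ y ≤ b` near `y`.
-/

open Filter Topology

/-- `w` is cadlag: right-continuous with left limits at every point. -/
def IsCadlag (w : ℝ → ℝ) : Prop :=
  (∀ x : ℝ, ContinuousWithinAt w (Set.Ici x) x) ∧
    ∀ x : ℝ, ∃ l : ℝ, Tendsto w (nhdsWithin x (Set.Iio x)) (𝓝 l)

/-- Membership in the space `𝔾`: cadlag `w` with `M_w(x) = x - w(x)` strictly
increasing and tending to `±∞` at `±∞`. -/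
def MemG (w : ℝ → ℝ) : Prop :=
  IsCadlag w ∧ StrictMono (fun x => x - w x) ∧
    Tendsto (fun x => x - w x) atTop atTop ∧
    Tendsto (fun x => x - w x) atBot atBot

/-- Generalized inverse of `M_w`. -/
noncomputable def Minv (w : ℝ → ℝ) (y : ℝ) : ℝ :=
  sInf {x : ℝ | y ≤ x - w x}

open Set

theorem tendstoLocallyUniformly_of_monotone_of_continuous {α ι : Type*} [LinearOrder α]
    [TopologicalSpace α] [OrderTopology α] {l : Filter ι} {F : ι → α → ℝ} {f : α → ℝ}
    (hF : ∀ i, Monotone (F i)) (hf : Continuous f)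
    (h : ∀ x, Tendsto (fun i => F i x) l (𝓝 (f x))) : TendstoLocallyUniformly F f l := by
  refine Metric.tendstoLocallyUniformly_iff.2 fun ε hε x => ?_
  have hε3 : 0 < ε / 3 := by positivity
  obtain ⟨a, b, ⟨hax, hxb⟩, hnhds, hclose⟩ := exists_Icc_mem_subset_of_mem_nhds
    (hf.continuousAt.preimage_mem_nhds (Metric.ball_mem_nhds (f x) hε3))
  refine ⟨Icc a b, hnhds, ?_⟩
  filter_upwards [(h a).eventually (Metric.ball_mem_nhds _ hε3),
    (h b).eventually (Metric.ball_mem_nhds _ hε3)] with i ha hb y hy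
  have hya : F i a ≤ F i y := hF i hy.1
  have hyb : F i y ≤ F i b := hF i hy.2
  have hfa := hclose (left_mem_Icc.2 (hax.trans hxb))
  have hfb := hclose (right_mem_Icc.2 (hax.trans hxb))
  have hfy := hclose hy
  simp only [mem_preimage, Metric.mem_ball, Real.dist_eq, abs_sub_lt_iff]
    at ha hb hfa hfb hfy ⊢
  constructor <;> linarith

noncomputable def genInv (f : ℝ → ℝ) (y : ℝ) : ℝ := sInf {x | y ≤ f x}

section genInv

variable {f : ℝ → ℝ} {x y : ℝ}

theorem bddBelow_setOf_le_apply (hbot : Tendsto f atBot atBot) (y : ℝ) :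
    BddBelow {x | y ≤ f x} := by
  obtain ⟨b, hb⟩ := (hbot.eventually_lt_atBot y).exists_forall_of_atBot
  exact ⟨b, fun x hx => le_of_not_gt fun hxb => (hb x hxb.le).not_ge hx⟩

theorem genInv_le (hbot : Tendsto f atBot atBot) (h : y ≤ f x) : genInv f y ≤ x :=
  csInf_le (bddBelow_setOf_le_apply hbot y) h

theorem apply_lt_of_lt_genInv (hbot : Tendsto f atBot atBot) (h : x < genInv f y) : f x < y :=
  lt_of_not_ge fun hy => (genInv_le hbot hy).not_gt h

theorem le_apply_genInv (hrc : ∀ x, ContinuousWithinAt f (Ici x) x)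
    (htop : Tendsto f atTop atTop) (hbot : Tendsto f atBot atBot) (y : ℝ) :
    y ≤ f (genInv f y) := by
  set S := {x | y ≤ f x}
  have hne : S.Nonempty := (htop.eventually_ge_atTop y).exists
  have hbdd := bddBelow_setOf_le_apply hbot y
  -- `sInf S` is approached within `S`, from the right, where `f` is continuous and `≥ y`.
  have : (𝓝[S] sInf S).NeBot :=
    mem_closure_iff_nhdsWithin_neBot.1 (csInf_mem_closure hne hbdd)
  have hcont : ContinuousWithinAt f S (sInf S) :=
    (hrc (sInf S)).mono fun _ hx => csInf_le hbdd hx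
  exact ge_of_tendsto hcont (eventually_nhdsWithin_of_forall fun x hx => hx)

theorem le_genInv (hf : Monotone f) (htop : Tendsto f atTop atTop) (h : f x < y) :
    x ≤ genInv f y :=
  le_csInf (htop.eventually_ge_atTop y).exists fun _ ht =>
    le_of_not_gt fun htx => ((hf htx.le).trans_lt h).not_ge ht

theorem genInv_monotone (htop : Tendsto f atTop atTop) (hbot : Tendsto f atBot atBot) :
    Monotone (genInv f) := fun _ y' hy =>
  le_csInf (htop.eventually_ge_atTop y').exists fun _ hx => genInv_le hbot (hy.trans hx)

theorem StrictMono.genInv_apply (hf : StrictMono f) (hbot : Tendsto f atBot atBot) (x : ℝ) :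
    genInv f (f x) = x :=
  le_antisymm (genInv_le hbot le_rfl) (le_csInf ⟨x, le_refl (f x)⟩ fun _ => hf.le_iff_le.1)

theorem StrictMono.continuous_genInv (hf : StrictMono f) (htop : Tendsto f atTop atTop)
    (hbot : Tendsto f atBot atBot) : Continuous (genInv f) :=
  (genInv_monotone htop hbot).continuous_of_surjective fun x => ⟨f x, hf.genInv_apply hbot x⟩

theorem tendsto_genInv_of_tendsto_on_dense {ι : Type*} {l : Filter ι} {F : ι → ℝ → ℝ}
    {D : Set ℝ} (hD : Dense D) (hF : ∀ i, Monotone (F i))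
    (hFtop : ∀ i, Tendsto (F i) atTop atTop) (hFbot : ∀ i, Tendsto (F i) atBot atBot)
    (hf : StrictMono f) (hrc : ∀ x, ContinuousWithinAt f (Ici x) x)
    (htop : Tendsto f atTop atTop) (hbot : Tendsto f atBot atBot)
    (hconv : ∀ x ∈ D, Tendsto (fun i => F i x) l (𝓝 (f x))) (y : ℝ) :
    Tendsto (fun i => genInv (F i) y) l (𝓝 (genInv f y)) := by
  refine tendsto_order.2 ⟨fun a ha => ?_, fun b hb => ?_⟩
  · obtain ⟨x, hxD, hax, hx⟩ := hD.exists_between ha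
    filter_upwards [(hconv x hxD).eventually_lt_const (apply_lt_of_lt_genInv hbot hx)]
      with i hi
    exact hax.trans_le (le_genInv (hF i) (hFtop i) hi)
  · obtain ⟨x, hxD, hx, hxb⟩ := hD.exists_between hb
    have hyx : y < f x := (le_apply_genInv hrc htop hbot y).trans_lt (hf hx)
    filter_upwards [(hconv x hxD).eventually_const_lt hyx] with i hi
    exact (genInv_le (hFbot i) hi.le).trans_lt hxb

end genInv

theorem Minv_eq_genInv (w : ℝ → ℝ) : Minv w = genInv (fun x => x - w x) := rfl

theorem Monotone.dense_setOf_continuousAt {f : ℝ → ℝ} (hf : Monotone f) :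
    Dense {x | ContinuousAt f x} := by
  simpa only [compl_ofPred, not_not] using hf.countable_not_continuousAt.dense_compl ℝ

theorem dense_setOf_continuousAt_of_monotone_sub {w : ℝ → ℝ}
    (hw : Monotone fun x => x - w x) :
    Dense {x | ContinuousAt w x} :=
  hw.dense_setOf_continuousAt.mono fun _ hx =>
    (continuousAt_id.sub hx).congr (Eventually.of_forall fun t => sub_sub_cancel t (w t))

theorem pointwise_convergence_implies_inverse_uniform (w : ℝ → ℝ) (wn : ℕ → ℝ → ℝ)
    (hw : MemG w) (hwn : ∀ n, MemG (wn n))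
    (hconv : ∀ x : ℝ, ContinuousAt w x → Tendsto (fun n => wn n x) atTop (𝓝 (w x))) :
    ∀ N : ℝ, TendstoUniformlyOn (fun n => Minv (wn n)) (Minv w) atTop (Set.Icc (-N) N) := by
  intro N
  simp only [Minv_eq_genInv]
  obtain ⟨⟨hrc, -⟩, hmono, htop, hbot⟩ := hw
  have hpointwise (y : ℝ) : Tendsto (fun n => genInv (fun x => x - wn n x) y) atTop
      (𝓝 (genInv (fun x => x - w x) y)) :=
    tendsto_genInv_of_tendsto_on_dense
      (dense_setOf_continuousAt_of_monotone_sub hmono.monotone)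
      (fun n => (hwn n).2.1.monotone) (fun n => (hwn n).2.2.1) (fun n => (hwn n).2.2.2)
      hmono (fun x => continuousWithinAt_id.sub (hrc x)) htop hbot
      (fun x hx => tendsto_const_nhds.sub (hconv x hx)) y
  have hlocal : TendstoLocallyUniformly (fun n => genInv (fun x => x - wn n x))
      (genInv (fun x => x - w x)) atTop :=
    tendstoLocallyUniformly_of_monotone_of_continuous
      (fun n => genInv_monotone (hwn n).2.2.1 (hwn n).2.2.2)
      (hmono.continuous_genInv htop hbot) hpointwise
  exact tendstoLocallyUniformly_iff_forall_isCompact.1 hlocal _ isCompact_Icc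
end

section
/- Let $W:\mathbb{R}\to\mathbb{R}$ and $V:\mathbb{R}\to\mathbb{R}$ satisfy $\lim_{y\to+\infty}V(y)/y=v_+\in\mathbb{R}$. Define $\Phi V(x)=\inf_{y\in\mathbb{R}}\left(V(y)+\tfrac12(x-y)^2\right)$, and suppose additionally that $\liminf_{y\to-\infty}V(y)/|y|>-\infty$ and that $V$ is continuous, so that the infimum is finite. Then $\lim_{x\to+\infty}\Phi V(x)/x=v_+$. -/
open Filter Topology

theorem hopf_lax_preserves_slope (V : ℝ → ℝ) (hV : Continuous V) (v : ℝ)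
    (hplus : Tendsto (fun y => V y / y) atTop (𝓝 v))
    (hminus : ∃ c : ℝ, ∀ᶠ y in atBot, c ≤ V y / |y|) :
    Tendsto (fun x => (⨅ y : ℝ, (V y + (x - y) ^ 2 / 2)) / x) atTop (𝓝 v) := by
  obtain ⟨c, hc⟩ := hminus
  rw [Metric.tendsto_nhds]
  intro ε hε
  obtain ⟨a, ha⟩ : ∃ a : ℝ, a = v - ε / 2 := ⟨_, rfl⟩
  obtain ⟨M, hM⟩ := eventually_atTop.mp
    (hplus.eventually (eventually_ge_nhds (show a < v by rw [ha]; linarith)))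
  obtain ⟨M', hM'⟩ := eventually_atBot.mp hc
  obtain ⟨M₀, hM₀⟩ : ∃ M₀ : ℝ, M₀ = max (max M (-M')) 1 := ⟨_, rfl⟩
  have hM₀1 : (1:ℝ) ≤ M₀ := hM₀ ▸ le_max_right _ _
  have hM₀M : M ≤ M₀ := hM₀ ▸ le_trans (le_max_left _ _) (le_max_left _ _)
  have hM₀M' : -M₀ ≤ M' := by
    have : -M' ≤ M₀ := hM₀ ▸ le_trans (le_max_right _ _) (le_max_left _ _)
    linarith
  obtain ⟨z, hz, hzmin⟩ := (isCompact_Icc : IsCompact (Set.Icc (-M₀) M₀)).exists_isMinOn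
    ⟨0, by constructor <;> linarith⟩ hV.continuousOn
  obtain ⟨K, hK⟩ : ∃ K : ℝ, K = a ^ 2 / 2 + c ^ 2 / 2 + |a| * M₀ + |V z| := ⟨_, rfl⟩
  obtain ⟨X, hX⟩ : ∃ X : ℝ, X = M₀ + 2 * |a| := ⟨_, rfl⟩
  have key : ∀ x : ℝ, X ≤ x → ∀ y : ℝ, a * x - K ≤ V y + (x - y) ^ 2 / 2 := by
    intro x hx y
    have habs : a ≤ |a| := le_abs_self a
    have habs0 : 0 ≤ |a| := abs_nonneg a
    have hxM : M₀ ≤ x := by rw [hX] at hx; linarith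
    have h3 : 0 ≤ c ^ 2 / 2 := by positivity
    have h4 : 0 ≤ |a| * M₀ := by positivity
    have h5 : 0 ≤ |V z| := abs_nonneg _
    rcases le_total M₀ y with hy | hy
    · -- y large
      have hy0 : (0:ℝ) < y := by linarith
      have hVy : a * y ≤ V y := by
        have := hM y (by linarith)
        rwa [le_div_iff₀ hy0] at this
      nlinarith [sq_nonneg (y - x + a)]
    rcases le_total (-M₀) y with hy' | hy'
    · -- middle range
      have hVz : V z ≤ V y := hzmin ⟨hy', hy⟩
      have hVz' : -|V z| ≤ V z := neg_abs_le _
      have h1 : (0:ℝ) ≤ x - M₀ := by linarith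
      have h2 : x - M₀ ≤ x - y := by linarith
      have hsq : (x - M₀) ^ 2 ≤ (x - y) ^ 2 := by nlinarith
      have hquad : 2 * |a| * (x - M₀) ≤ (x - M₀) ^ 2 := by
        have hxX : 2 * |a| ≤ x - M₀ := by rw [hX] at hx; linarith
        nlinarith
      have hlin : a * (x - M₀) ≤ |a| * (x - M₀) := mul_le_mul_of_nonneg_right habs h1
      nlinarith [sq_nonneg a]
    · -- y very negative
      have hy0 : y ≤ -1 := by linarith
      have hVy : c * (-y) ≤ V y := by
        have h := hM' y (by linarith)
        have hya : |y| = -y := abs_of_nonpos (by linarith)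
        rw [le_div_iff₀ (by rw [hya]; linarith : (0:ℝ) < |y|), hya] at h
        linarith
      have hx0 : (0:ℝ) ≤ x := by linarith
      have hxX : 2 * |a| ≤ x := by rw [hX] at hx; linarith
      have hxy : 0 ≤ x * (-y) := mul_nonneg hx0 (by linarith)
      nlinarith [sq_nonneg (y - c), sq_nonneg (x - 2 * |a|)]
  have hKx : Tendsto (fun x : ℝ => K / x) atTop (𝓝 0) :=
    tendsto_const_nhds.div_atTop tendsto_id
  have hup : ∀ᶠ x in atTop, V x / x < v + ε :=
    hplus.eventually (eventually_lt_nhds (by linarith))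
  filter_upwards [eventually_ge_atTop X, eventually_gt_atTop (0:ℝ), hup,
    hKx.eventually (eventually_lt_nhds (show (0:ℝ) < ε / 2 by linarith))] with x hx hx0 hVx hKx'
  have hbdd : BddBelow (Set.range fun y : ℝ => V y + (x - y) ^ 2 / 2) := by
    refine ⟨a * x - K, ?_⟩
    rintro _ ⟨y, rfl⟩
    exact key x hx y
  have hPhi_le : (⨅ y : ℝ, (V y + (x - y) ^ 2 / 2)) ≤ V x := by
    have := ciInf_le hbdd x
    simpa using this
  have hPhi_ge : a * x - K ≤ ⨅ y : ℝ, (V y + (x - y) ^ 2 / 2) :=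
    le_ciInf (key x hx)
  rw [Real.dist_eq, abs_sub_lt_iff]
  have hupbd : (⨅ y : ℝ, (V y + (x - y) ^ 2 / 2)) / x ≤ V x / x :=
    (div_le_div_iff_of_pos_right hx0).mpr hPhi_le
  have h1 : (a * x - K) / x ≤ (⨅ y : ℝ, (V y + (x - y) ^ 2 / 2)) / x :=
    (div_le_div_iff_of_pos_right hx0).mpr hPhi_ge
  have h2 : (a * x - K) / x = a - K / x := by field_simp
  rw [h2, ha] at h1
  constructor
  · linarith
  · linarith
end
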